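/- arXiv:2311.02666 — 8 statements merged into one kernel-verified Lean document; each statement's English description precedes it below -/
import Mathlib

section
/- Let ℂ be a category with a terminal object 1 and 𝔻 a category with an initial object 0. The pair (ℂ×𝟎, 𝟏×𝔻) is a pretorsion theory in the product category ℂ×𝔻 if and only if every morphism C → 1 in ℂ is an epimorphism and every morphism 0 → D in 𝔻 is a monomorphism. -/
open CategoryTheory CategoryTheory.Limits

universe w v v₁ v₂ u u₁ u₂

/-- A morphism is *null* relative to a class of objects `Z` if it factors
through some object of `Z`. -/
def IsNull {C : Type u} [Category.{v} C] (Z : Set C) {X Y : C} (f : X ⟶ Y) : Prop :=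
  ∃ (W : C) (_ : W ∈ Z) (g : X ⟶ W) (h : W ⟶ Y), g ≫ h = f

/-- `m : T ⟶ X` is a kernel of `e : X ⟶ F` relative to the ideal of morphisms
factoring through objects of `Z`. -/
def IsRelKernel {C : Type u} [Category.{v} C] (Z : Set C) {T X F : C}
    (m : T ⟶ X) (e : X ⟶ F) : Prop :=
  IsNull Z (m ≫ e) ∧ ∀ ⦃U : C⦄ (u : U ⟶ X), IsNull Z (u ≫ e) → ∃! u' : U ⟶ T, u' ≫ m = u

/-- `e : X ⟶ F` is a cokernel of `m : T ⟶ X` relative to the ideal of morphisms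
factoring through objects of `Z`. -/
def IsRelCokernel {C : Type u} [Category.{v} C] (Z : Set C) {T X F : C}
    (m : T ⟶ X) (e : X ⟶ F) : Prop :=
  IsNull Z (m ≫ e) ∧ ∀ ⦃V : C⦄ (v : X ⟶ V), IsNull Z (m ≫ v) → ∃! v' : F ⟶ V, e ≫ v' = v

/-- `T ⟶ X ⟶ F` is a short exact sequence relative to the null ideal determined by `Z`. -/
def IsShortExact {C : Type u} [Category.{v} C] (Z : Set C) {T X F : C}
    (m : T ⟶ X) (e : X ⟶ F) : Prop :=
  IsRelKernel Z m e ∧ IsRelCokernel Z m e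

/-- `(T, F)` is a pretorsion theory: (T1) every morphism from a torsion object to a
torsion-free object is null, and (T2) every object is the middle term of a short
exact sequence with torsion left part and torsion-free right part. -/
def IsPretorsionTheory {C : Type u} [Category.{v} C] (T F : Set C) : Prop :=
  (∀ ⦃A B : C⦄, A ∈ T → B ∈ F → ∀ f : A ⟶ B, IsNull (T ∩ F) f) ∧
  (∀ X : C, ∃ (A B : C) (_ : A ∈ T) (_ : B ∈ F) (m : A ⟶ X) (e : X ⟶ B),
    IsShortExact (T ∩ F) m e)

/-- For categories `C` with a terminal object and `D` with an initial object,
`(C × 𝟎, 𝟏 × D)` is a pretorsion theory in `C × D` iff every morphism to the terminal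
object of `C` is an epimorphism and every morphism from the initial object of `D` is a
monomorphism. -/
theorem stmt0 {C : Type u₁} {D : Type u₂} [Category.{v₁} C] [Category.{v₂} D]
    [HasTerminal C] [HasInitial D] :
    IsPretorsionTheory
      {P : C × D | Nonempty (IsInitial P.2)}
      {P : C × D | Nonempty (IsTerminal P.1)} ↔
    (∀ (X : C) (f : X ⟶ ⊤_ C), Epi f) ∧ (∀ (Y : D) (f : ⊥_ D ⟶ Y), Mono f) := by
  constructor
  · rintro ⟨-, h2⟩
    constructor
    · -- every morphism to the terminal object is epi
      intro X f
      obtain rfl : f = terminal.from X := terminalIsTerminal.hom_ext f _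
      obtain ⟨A, B, ⟨hA⟩, ⟨hB⟩, m, e, hse⟩ := h2 (X, ⊥_ D)
      -- obtain q : B ⟶ (⊤_ C, ⊥_ D) with e ≫ q = (terminal.from X, 𝟙 _)
      obtain ⟨q, hq, -⟩ := hse.2.2 ((terminal.from X, 𝟙 (⊥_ D)) : (X, ⊥_ D) ⟶ (⊤_ C, ⊥_ D))
        ⟨(⊤_ C, A.2), ⟨⟨hA⟩, ⟨terminalIsTerminal⟩⟩, (terminal.from A.1, 𝟙 A.2), (𝟙 (⊤_ C), m.2),
          Prod.ext (terminalIsTerminal.hom_ext _ _) (by simp)⟩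
      have hq1 : e.1 ≫ q.1 = terminal.from X := congrArg Prod.fst hq
      constructor
      intro V g h hgh
      have hnull : ∀ k : ⊤_ C ⟶ V, IsNull ({P : C × D | Nonempty (IsInitial P.2)} ∩
          {P : C × D | Nonempty (IsTerminal P.1)})
          (m ≫ ((terminal.from X ≫ g, 𝟙 (⊥_ D)) : (X, ⊥_ D) ⟶ (V, ⊥_ D))) := fun k =>
        ⟨(⊤_ C, A.2), ⟨⟨hA⟩, ⟨terminalIsTerminal⟩⟩, (terminal.from A.1, 𝟙 A.2), (g, m.2),
          Prod.ext (by
            show terminal.from A.1 ≫ g = m.1 ≫ terminal.from X ≫ g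
            rw [← Category.assoc, terminalIsTerminal.hom_ext (terminal.from A.1)
              (m.1 ≫ terminal.from X)]) (by simp)⟩
      obtain ⟨w, hw, hwuniq⟩ := hse.2.2 ((terminal.from X ≫ g, 𝟙 (⊥_ D)) : (X, ⊥_ D) ⟶ (V, ⊥_ D))
        (hnull g)
      have h1 : ((q.1 ≫ g, w.2) : B ⟶ (V, ⊥_ D)) = w := hwuniq _
        (Prod.ext (by show e.1 ≫ q.1 ≫ g = terminal.from X ≫ g; rw [← Category.assoc, hq1])
          (by show e.2 ≫ w.2 = 𝟙 (⊥_ D); exact congrArg Prod.snd hw))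
      have h2' : ((q.1 ≫ h, w.2) : B ⟶ (V, ⊥_ D)) = w := hwuniq _
        (Prod.ext (by show e.1 ≫ q.1 ≫ h = terminal.from X ≫ g
                      rw [← Category.assoc, hq1, hgh])
          (by show e.2 ≫ w.2 = 𝟙 (⊥_ D); exact congrArg Prod.snd hw))
      have hqgh : q.1 ≫ g = q.1 ≫ h := congrArg Prod.fst (h1.trans h2'.symm)
      have hr : (hB.from (⊤_ C)) ≫ q.1 = 𝟙 (⊤_ C) := terminalIsTerminal.hom_ext _ _
      calc g = (hB.from (⊤_ C) ≫ q.1) ≫ g := by rw [hr, Category.id_comp]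
        _ = (hB.from (⊤_ C) ≫ q.1) ≫ h := by rw [Category.assoc, hqgh, Category.assoc]
        _ = h := by rw [hr, Category.id_comp]
    · -- every morphism from the initial object is mono
      intro Y f
      obtain rfl : f = initial.to Y := initialIsInitial.hom_ext f _
      obtain ⟨A, B, ⟨hA⟩, ⟨hB⟩, m, e, hse⟩ := h2 (⊤_ C, Y)
      obtain ⟨p, hp, -⟩ := hse.1.2 ((terminal.from A.1, initial.to Y) : (A.1, ⊥_ D) ⟶ (⊤_ C, Y))
        ⟨(B.1, ⊥_ D), ⟨⟨initialIsInitial⟩, ⟨hB⟩⟩, (terminal.from A.1 ≫ e.1, 𝟙 (⊥_ D)),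
          (𝟙 B.1, initial.to Y ≫ e.2), Prod.ext (by simp) (by simp)⟩
      have hp2 : p.2 ≫ m.2 = initial.to Y := congrArg Prod.snd hp
      constructor
      intro U v w hvw
      obtain ⟨u', hu', huniq⟩ := hse.1.2 ((𝟙 (⊤_ C), v ≫ initial.to Y) : (⊤_ C, U) ⟶ (⊤_ C, Y))
        ⟨(B.1, ⊥_ D), ⟨⟨initialIsInitial⟩, ⟨hB⟩⟩, (𝟙 (⊤_ C) ≫ e.1, v),
          (𝟙 B.1, initial.to Y ≫ e.2), Prod.ext (by simp) (by simp)⟩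
      have h1 : ((u'.1, v ≫ p.2) : (⊤_ C, U) ⟶ A) = u' := huniq _
        (Prod.ext (by show u'.1 ≫ m.1 = 𝟙 (⊤_ C); exact congrArg Prod.fst hu')
          (by show (v ≫ p.2) ≫ m.2 = v ≫ initial.to Y; rw [Category.assoc, hp2]))
      have h2' : ((u'.1, w ≫ p.2) : (⊤_ C, U) ⟶ A) = u' := huniq _
        (Prod.ext (by show u'.1 ≫ m.1 = 𝟙 (⊤_ C); exact congrArg Prod.fst hu')
          (by show (w ≫ p.2) ≫ m.2 = v ≫ initial.to Y; rw [Category.assoc, hp2, ← hvw]))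
      have hvpw : v ≫ p.2 = w ≫ p.2 := congrArg Prod.snd (h1.trans h2'.symm)
      have hr : p.2 ≫ hA.to (⊥_ D) = 𝟙 (⊥_ D) := initialIsInitial.hom_ext _ _
      calc v = v ≫ p.2 ≫ hA.to (⊥_ D) := by rw [hr, Category.comp_id]
        _ = w ≫ p.2 ≫ hA.to (⊥_ D) := by rw [← Category.assoc, hvpw, Category.assoc]
        _ = w := by rw [hr, Category.comp_id]
  · rintro ⟨hepi, hmono⟩
    constructor
    · -- (T1): always holds
      rintro ⟨A₁, A₂⟩ ⟨B₁, B₂⟩ ⟨hA⟩ ⟨hB⟩ f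
      exact ⟨(B₁, A₂), ⟨⟨hA⟩, ⟨hB⟩⟩, (f.1, 𝟙 A₂), (𝟙 B₁, f.2),
        Prod.ext (by simp) (by simp)⟩
    · -- (T2): the canonical short exact sequence
      rintro ⟨X₁, X₂⟩
      refine ⟨(X₁, ⊥_ D), (⊤_ C, X₂), ⟨initialIsInitial⟩, ⟨terminalIsTerminal⟩,
        (𝟙 X₁, initial.to X₂), (terminal.from X₁, 𝟙 X₂), ?_, ?_⟩
      · constructor
        · exact ⟨(⊤_ C, ⊥_ D), ⟨⟨initialIsInitial⟩, ⟨terminalIsTerminal⟩⟩,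
            (terminal.from X₁, 𝟙 (⊥_ D)), (𝟙 (⊤_ C), initial.to X₂),
            Prod.ext (by simp) (by simp)⟩
        · rintro ⟨U₁, U₂⟩ u ⟨W, ⟨⟨hWi⟩, -⟩, g, h, hgh⟩
          have hgh2 : g.2 ≫ h.2 = u.2 := by
            have := congrArg Prod.snd hgh
            simpa using this
          refine ⟨(u.1, g.2 ≫ hWi.to (⊥_ D)), Prod.ext (by simp) ?_, ?_⟩
          · show (g.2 ≫ hWi.to (⊥_ D)) ≫ initial.to X₂ = u.2
            rw [Category.assoc, ← hgh2]
            congr 1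
            exact hWi.hom_ext _ _
          · rintro y hy
            have hy1 : y.1 ≫ 𝟙 X₁ = u.1 := congrArg Prod.fst hy
            have hy2 : y.2 ≫ initial.to X₂ = u.2 := congrArg Prod.snd hy
            have : Mono (initial.to X₂) := hmono X₂ _
            refine Prod.ext (by simpa using hy1) ?_
            have heq : y.2 ≫ initial.to X₂ = (g.2 ≫ hWi.to (⊥_ D)) ≫ initial.to X₂ := by
              rw [hy2, Category.assoc, ← hgh2]
              congr 1
              exact (hWi.hom_ext _ _).symm
            exact (cancel_mono (initial.to X₂)).mp heq
      · constructor
        · exact ⟨(⊤_ C, ⊥_ D), ⟨⟨initialIsInitial⟩, ⟨terminalIsTerminal⟩⟩,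
            (terminal.from X₁, 𝟙 (⊥_ D)), (𝟙 (⊤_ C), initial.to X₂),
            Prod.ext (by simp) (by simp)⟩
        · rintro ⟨V₁, V₂⟩ v ⟨W, ⟨-, ⟨hWt⟩⟩, g, h, hgh⟩
          have hgh1 : g.1 ≫ h.1 = v.1 := by
            have := congrArg Prod.fst hgh
            simpa using this
          refine ⟨(hWt.from (⊤_ C) ≫ h.1, v.2), Prod.ext ?_ (by simp), ?_⟩
          · show terminal.from X₁ ≫ hWt.from (⊤_ C) ≫ h.1 = v.1
            rw [← Category.assoc, ← hgh1]
            congr 1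
            exact hWt.hom_ext _ _
          · rintro y hy
            have hy1 : terminal.from X₁ ≫ y.1 = v.1 := congrArg Prod.fst hy
            have hy2 : (𝟙 X₂) ≫ y.2 = v.2 := congrArg Prod.snd hy
            have : Epi (terminal.from X₁) := hepi X₁ _
            refine Prod.ext ?_ (by simpa using hy2)
            have heq : terminal.from X₁ ≫ y.1 = terminal.from X₁ ≫ hWt.from (⊤_ C) ≫ h.1 := by
              rw [hy1, ← Category.assoc, ← hgh1]
              congr 1
              exact (hWt.hom_ext _ _).symm
            exact (cancel_epi (terminal.from X₁)).mp heq
end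

section
/- Let ℂ and 𝔻 be categories, I an initial object of 𝔻 and T a terminal object of ℂ. A sequence (X,I) →^{(m₁,m₂)} (C,D) →^{(e₁,e₂)} (T,Y) in ℂ×𝔻 is a short exact sequence (relative to the ideal of morphisms factoring through objects of 𝟏×𝟎, i.e., objects whose first component is terminal in ℂ and second component is initial in 𝔻) if and only if m₁ is an isomorphism, m₂ is a monomorphism, e₁ is an epimorphism, and e₂ is an isomorphism. -/
open CategoryTheory CategoryTheory.Limits

universe w v v₁ v₂ u u₁ u₂

/-- a sequence `(X,I) ⟶ (C,D) ⟶ (T,Y)` in `ℂ × 𝔻`, with `I` initial and `T`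
terminal, is short exact (relative to the ideal of morphisms factoring through objects of
`𝟏 × 𝟎`) iff `m₁` is an isomorphism, `m₂` is a monomorphism, `e₁` is an epimorphism and
`e₂` is an isomorphism. -/
theorem stmt1 {𝕮 : Type u₁} {𝕯 : Type u₂} [Category.{v₁} 𝕮] [Category.{v₂} 𝕯]
    {I : 𝕯} (hI : IsInitial I) {T : 𝕮} (hT : IsTerminal T)
    {X C : 𝕮} {D Y : 𝕯}
    (m₁ : X ⟶ C) (m₂ : I ⟶ D) (e₁ : C ⟶ T) (e₂ : D ⟶ Y) :
    IsShortExact {P : 𝕮 × 𝕯 | Nonempty (IsTerminal P.1) ∧ Nonempty (IsInitial P.2)}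
      ((m₁, m₂) : ((X, I) : 𝕮 × 𝕯) ⟶ (C, D))
      ((e₁, e₂) : ((C, D) : 𝕮 × 𝕯) ⟶ (T, Y)) ↔
    IsIso m₁ ∧ Mono m₂ ∧ Epi e₁ ∧ IsIso e₂ := by
  have ZZmem : ((T, I) : 𝕮 × 𝕯) ∈
      {P : 𝕮 × 𝕯 | Nonempty (IsTerminal P.1) ∧ Nonempty (IsInitial P.2)} :=
    ⟨⟨hT⟩, ⟨hI⟩⟩
  have hnull : IsNull {P : 𝕮 × 𝕯 | Nonempty (IsTerminal P.1) ∧ Nonempty (IsInitial P.2)}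
      (((m₁, m₂) : ((X, I) : 𝕮 × 𝕯) ⟶ (C, D)) ≫ ((e₁, e₂) : ((C, D) : 𝕮 × 𝕯) ⟶ (T, Y))) :=
    by
      refine ⟨(T, I), ZZmem, (hT.from X, 𝟙 I), (𝟙 T, m₂ ≫ e₂), ?_⟩
      exact Prod.ext (hT.hom_ext _ _) (by simp)
  constructor
  · rintro ⟨⟨-, hker⟩, ⟨-, hcoker⟩⟩
    -- m₁ is iso
    have hiso₁ : IsIso m₁ := by
      obtain ⟨⟨s, t⟩, hs, -⟩ := hker (U := ((C, I) : 𝕮 × 𝕯)) (𝟙 C, m₂)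
        (by
          refine ⟨(T, I), ZZmem, (hT.from C, 𝟙 I), (𝟙 T, m₂ ≫ e₂), ?_⟩
          exact Prod.ext (hT.hom_ext _ _) (by simp))
      have hs1 : s ≫ m₁ = 𝟙 C := congrArg Prod.fst hs
      obtain ⟨w, -, huniq⟩ := hker (U := ((X, I) : 𝕮 × 𝕯)) (m₁, m₂) hnull
      have h1 := huniq ((𝟙 X, 𝟙 I)) (Prod.ext (by simp) (by simp))
      have h2 := huniq ((m₁ ≫ s, 𝟙 I))
        (Prod.ext (by simp [Category.assoc, hs1]) (by simp))
      have : m₁ ≫ s = 𝟙 X := by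
        have := h2.trans h1.symm
        simpa using congrArg Prod.fst this
      exact ⟨s, this, hs1⟩
    -- m₂ mono
    have hmono : Mono m₂ := by
      constructor
      intro W a b hab
      obtain ⟨w, -, huniq⟩ := hker (U := ((X, W) : 𝕮 × 𝕯)) (m₁, a ≫ m₂)
        (by
          refine ⟨(T, I), ZZmem, (hT.from X, a), (𝟙 T, m₂ ≫ e₂), ?_⟩
          exact Prod.ext (hT.hom_ext _ _) (by simp))
      have h1 := huniq ((𝟙 X, a)) (Prod.ext (by simp) (by simp))
      have h2 := huniq ((𝟙 X, b)) (Prod.ext (by simp) (by simp [hab]))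
      simpa using congrArg Prod.snd (h1.trans h2.symm)
    -- e₂ iso
    have hiso₂ : IsIso e₂ := by
      obtain ⟨⟨r₁, r₂⟩, hr, -⟩ := hcoker (V := ((T, D) : 𝕮 × 𝕯)) (e₁, 𝟙 D)
        (by
          refine ⟨(T, I), ZZmem, (hT.from X, 𝟙 I), (𝟙 T, m₂), ?_⟩
          exact Prod.ext (hT.hom_ext _ _) (by simp))
      have hr2 : e₂ ≫ r₂ = 𝟙 D := congrArg Prod.snd hr
      obtain ⟨w, -, huniq⟩ := hcoker (V := ((T, Y) : 𝕮 × 𝕯)) (e₁, e₂) hnull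
      have h1 := huniq ((𝟙 T, 𝟙 Y)) (Prod.ext (by simp) (by simp))
      have h2 := huniq ((𝟙 T, r₂ ≫ e₂))
        (Prod.ext (by simp) (by simp [← Category.assoc, hr2]))
      have : r₂ ≫ e₂ = 𝟙 Y := by
        simpa using congrArg Prod.snd (h2.trans h1.symm)
      exact ⟨r₂, hr2, this⟩
    -- e₁ epi
    have hepi : Epi e₁ := by
      constructor
      intro W a b hab
      obtain ⟨w, -, huniq⟩ := hcoker (V := ((W, Y) : 𝕮 × 𝕯)) (e₁ ≫ a, e₂)
        (by
          refine ⟨(T, I), ZZmem, (hT.from X, 𝟙 I), (a, m₂ ≫ e₂), ?_⟩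
          refine Prod.ext ?_ (by simp)
          have h3 : m₁ ≫ e₁ = hT.from X := hT.hom_ext _ _
          show hT.from X ≫ a = m₁ ≫ e₁ ≫ a
          rw [← Category.assoc, h3])
      have h1 := huniq ((a, 𝟙 Y)) (Prod.ext (by simp) (by simp))
      have h2 := huniq ((b, 𝟙 Y)) (Prod.ext (by simp [hab]) (by simp))
      simpa using congrArg Prod.fst (h1.trans h2.symm)
    exact ⟨hiso₁, hmono, hepi, hiso₂⟩
  · rintro ⟨hm₁, hm₂, he₁, he₂⟩
    constructor
    · refine ⟨hnull, ?_⟩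
      rintro ⟨U₁, U₂⟩ ⟨u₁, u₂⟩ ⟨⟨W₁, W₂⟩, ⟨⟨hW₁⟩, ⟨hW₂⟩⟩, ⟨g₁, g₂⟩, ⟨h₁, h₂⟩, hgh⟩
      have hgh2 : g₂ ≫ h₂ = u₂ ≫ e₂ := congrArg Prod.snd hgh
      have hcand : (g₂ ≫ hW₂.to I) ≫ m₂ = u₂ := by
        have h4 : ((g₂ ≫ hW₂.to I) ≫ m₂) ≫ e₂ = u₂ ≫ e₂ := by
          rw [← hgh2, Category.assoc, Category.assoc]
          congr 1
          exact hW₂.hom_ext _ _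
        exact (cancel_mono e₂).mp h4
      refine ⟨(u₁ ≫ inv m₁, g₂ ≫ hW₂.to I), Prod.ext (by simp) hcand, ?_⟩
      rintro ⟨a₁, a₂⟩ ha
      have ha1 : a₁ ≫ m₁ = u₁ := congrArg Prod.fst ha
      have ha2 : a₂ ≫ m₂ = u₂ := congrArg Prod.snd ha
      refine Prod.ext (by simp [← ha1]) ?_
      exact (cancel_mono m₂).mp (ha2.trans hcand.symm)
    · refine ⟨hnull, ?_⟩
      rintro ⟨V₁, V₂⟩ ⟨v₁, v₂⟩ ⟨⟨W₁, W₂⟩, ⟨⟨hW₁⟩, ⟨hW₂⟩⟩, ⟨g₁, g₂⟩, ⟨h₁, h₂⟩, hgh⟩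
      have hgh1 : g₁ ≫ h₁ = m₁ ≫ v₁ := congrArg Prod.fst hgh
      refine ⟨(hW₁.from T ≫ h₁, inv e₂ ≫ v₂), Prod.ext ?_ (by simp), ?_⟩
      · -- e₁ ≫ hW₁.from T ≫ h₁ = v₁
        show e₁ ≫ hW₁.from T ≫ h₁ = v₁
        have h3 : e₁ ≫ hW₁.from T = inv m₁ ≫ g₁ := hW₁.hom_ext _ _
        rw [← Category.assoc, h3, Category.assoc, hgh1]
        simp
      · rintro ⟨a₁, a₂⟩ ha
        have ha1 : e₁ ≫ a₁ = v₁ := congrArg Prod.fst ha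
        have ha2 : e₂ ≫ a₂ = v₂ := congrArg Prod.snd ha
        refine Prod.ext ?_ ?_
        · apply (cancel_epi e₁).mp
          show e₁ ≫ a₁ = e₁ ≫ hW₁.from T ≫ h₁
          rw [ha1, ← Category.assoc, hW₁.hom_ext (e₁ ≫ hW₁.from T) (inv m₁ ≫ g₁),
            Category.assoc, hgh1]
          simp
        · simp [← ha2]
end

section
/- For any category ℂ having a terminal object, the pair (ℂ, 𝟏), where 𝟏 is the full replete subcategory of terminal objects of ℂ, is a pretorsion theory in ℂ if and only if every morphism of ℂ to a terminal object is an epimorphism. -/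
open CategoryTheory CategoryTheory.Limits

universe w v v₁ v₂ u u₁ u₂

/-- for a category `ℂ` with a terminal object, `(ℂ, 𝟏)` (where `𝟏` is the
class of terminal objects) is a pretorsion theory iff every morphism of `ℂ` to a terminal
object is an epimorphism. -/
theorem stmt5 {C : Type u₁} [Category.{v₁} C] [HasTerminal C] :
    IsPretorsionTheory (Set.univ : Set C) {X : C | Nonempty (IsTerminal X)} ↔
    ∀ ⦃X T : C⦄, IsTerminal T → ∀ f : X ⟶ T, Epi f := by
  constructor
  · rintro ⟨_, h2⟩ X T hT f
    obtain ⟨A, B, -, ⟨hB⟩, m, e, ⟨-, -⟩, ⟨-, hcoker⟩⟩ := h2 X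
    constructor
    intro Y g h hgh
    have hnull : IsNull (Set.univ ∩ {X : C | Nonempty (IsTerminal X)}) (m ≫ (f ≫ g)) :=
      ⟨T, ⟨trivial, ⟨hT⟩⟩, m ≫ f, g, by simp⟩
    obtain ⟨v', -, huniq⟩ := hcoker (f ≫ g) hnull
    have hf : f = e ≫ hT.from B := hT.hom_ext f (e ≫ hT.from B)
    have h1 : e ≫ (hT.from B ≫ g) = f ≫ g := by rw [← Category.assoc, ← hf]
    have h2' : e ≫ (hT.from B ≫ h) = f ≫ g := by rw [← Category.assoc, ← hf, hgh]
    have key : hT.from B ≫ g = hT.from B ≫ h := (huniq _ h1).trans (huniq _ h2').symm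
    have hid : hB.from T ≫ hT.from B = 𝟙 T := hT.hom_ext _ _
    calc g = (hB.from T ≫ hT.from B) ≫ g := by rw [hid, Category.id_comp]
      _ = (hB.from T ≫ hT.from B) ≫ h := by rw [Category.assoc, key, Category.assoc]
      _ = h := by rw [hid, Category.id_comp]
  · intro hepi
    constructor
    · intro A B _ hB f
      exact ⟨B, ⟨trivial, hB⟩, f, 𝟙 B, by simp⟩
    · intro X
      refine ⟨X, ⊤_ C, trivial, ⟨terminalIsTerminal⟩, 𝟙 X, terminal.from X, ?_, ?_⟩
      · constructor
        · exact ⟨⊤_ C, ⟨trivial, ⟨terminalIsTerminal⟩⟩, terminal.from X, 𝟙 _, by simp⟩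
        · intro U u _
          exact ⟨u, by simp, fun y hy => by simpa using hy⟩
      · constructor
        · exact ⟨⊤_ C, ⟨trivial, ⟨terminalIsTerminal⟩⟩, terminal.from X, 𝟙 _, by simp⟩
        · intro V v hv
          obtain ⟨W, ⟨-, ⟨iW⟩⟩, g, h, hgh⟩ := hv
          have he : Epi (terminal.from X) := hepi terminalIsTerminal _
          have hcomp : terminal.from X ≫ (iW.from (⊤_ C) ≫ h) = v := by
            rw [← Category.assoc, iW.hom_ext (terminal.from X ≫ iW.from (⊤_ C)) g, hgh,
              Category.id_comp]
          refine ⟨iW.from (⊤_ C) ≫ h, hcomp, ?_⟩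
          intro y hy
          exact he.left_cancellation _ _ (hy.trans hcomp.symm)
end

section
/- For any category 𝔻 having an initial object, the pair (𝟎, 𝔻), where 𝟎 is the full replete subcategory of initial objects of 𝔻, is a pretorsion theory in 𝔻 if and only if every morphism of 𝔻 from an initial object is a monomorphism. -/
open CategoryTheory CategoryTheory.Limits

universe w v v₁ v₂ u u₁ u₂

/-- for a category `𝔻` with an initial object, `(𝟎, 𝔻)` (where `𝟎` is the
class of initial objects) is a pretorsion theory iff every morphism of `𝔻` from an initial
object is a monomorphism. -/
theorem stmt6 {D : Type u₁} [Category.{v₁} D] [HasInitial D] :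
    IsPretorsionTheory {X : D | Nonempty (IsInitial X)} (Set.univ : Set D) ↔
    ∀ ⦃I Y : D⦄, IsInitial I → ∀ f : I ⟶ Y, Mono f := by
  constructor
  · rintro ⟨-, h2⟩ I Y hI f
    obtain ⟨A, B, ⟨hA⟩, -, m, e, ⟨⟨hnull, huniv⟩, -⟩⟩ := h2 Y
    have hm : Mono m := by
      constructor
      intro W u₁ u₂ hu
      obtain ⟨Z0, hZ0, g, h, hg⟩ := hnull
      have hn : IsNull ({X : D | Nonempty (IsInitial X)} ∩ Set.univ) ((u₁ ≫ m) ≫ e) :=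
        ⟨Z0, hZ0, u₁ ≫ g, h, by rw [Category.assoc, hg, Category.assoc]⟩
      obtain ⟨u', -, huniq⟩ := huniv (u₁ ≫ m) hn
      exact (huniq u₁ rfl).trans (huniq u₂ hu.symm).symm
    have hf : f = hI.to A ≫ m := hI.hom_ext _ _
    have hsplit : hI.to A ≫ hA.to I = 𝟙 I := hI.hom_ext _ _
    have hmono : Mono (hI.to A) := ⟨fun g h hgh => by
      have := congrArg (· ≫ hA.to I) hgh
      simpa [Category.assoc, hsplit] using this⟩
    rw [hf]
    exact mono_comp _ _
  · intro hmono
    constructor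
    · rintro A B ⟨hA⟩ - f
      exact ⟨A, ⟨⟨hA⟩, trivial⟩, 𝟙 A, f, Category.id_comp f⟩
    · intro X
      have hnull : IsNull ({X : D | Nonempty (IsInitial X)} ∩ Set.univ)
          (initial.to X ≫ 𝟙 X) :=
        ⟨⊥_ D, ⟨⟨initialIsInitial⟩, trivial⟩, 𝟙 _, initial.to X ≫ 𝟙 X, Category.id_comp _⟩
      refine ⟨⊥_ D, X, ⟨initialIsInitial⟩, trivial, initial.to X, 𝟙 X,
        ⟨⟨hnull, ?_⟩, ⟨hnull, ?_⟩⟩⟩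
      · intro U u hu
        obtain ⟨W, ⟨⟨hW⟩, -⟩, g, h, hg⟩ := hu
        have hmonoInit : Mono (initial.to X) := hmono initialIsInitial _
        refine ⟨g ≫ hW.to (⊥_ D), ?_, fun y hy => ?_⟩
        · have h1 : hW.to (⊥_ D) ≫ initial.to X = h := hW.hom_ext _ _
          show (g ≫ hW.to (⊥_ D)) ≫ initial.to X = u
          rw [Category.assoc, h1, hg, Category.comp_id]
        · have h1 : hW.to (⊥_ D) ≫ initial.to X = h := hW.hom_ext _ _
          have h2 : (g ≫ hW.to (⊥_ D)) ≫ initial.to X = u := by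
            rw [Category.assoc, h1, hg, Category.comp_id]
          exact (cancel_mono (initial.to X)).1 (hy.trans h2.symm)
      · intro V v _
        exact ⟨v, Category.id_comp v, fun y hy => by simpa using hy⟩
end

section
/- Let (ℂᵢ)_{i∈I} be a non-empty family of non-empty categories, and for each i let 𝒯ᵢ and ℱᵢ be full replete subcategories of ℂᵢ. The pair (∏ᵢ𝒯ᵢ, ∏ᵢℱᵢ), consisting of the full subcategories of the product category ∏ᵢℂᵢ whose objects are families lying componentwise in 𝒯ᵢ (respectively in ℱᵢ), is a pretorsion theory in ∏ᵢℂᵢ if and only if for every i the pair (𝒯ᵢ, ℱᵢ) is a pretorsion theory in ℂᵢ. -/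
open CategoryTheory CategoryTheory.Limits

universe w v v₁ v₂ u u₁ u₂

section Helpers

variable {I : Type w} [DecidableEq I] {C : I → Type u} [∀ i, Category.{v} (C i)]

def updL {b c : ∀ j, C j} (g : ∀ j, b j ⟶ c j) (i : I) {X : C i} (f : X ⟶ c i) :
    ∀ j, Function.update b i X j ⟶ c j := fun j =>
  dite (j = i)
    (fun h => by subst h; exact eqToHom (Function.update_self j X b) ≫ f)
    (fun h => eqToHom (Function.update_of_ne h X b) ≫ g j)

@[simp] lemma updL_same {b c : ∀ j, C j} (g : ∀ j, b j ⟶ c j) (i : I) {X : C i} (f : X ⟶ c i) :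
    updL g i f i = eqToHom (Function.update_self i X b) ≫ f := by
  simp [updL]

@[simp] lemma updL_noteq {b c : ∀ j, C j} (g : ∀ j, b j ⟶ c j) (i : I) {X : C i} (f : X ⟶ c i)
    {j : I} (h : j ≠ i) :
    updL g i f j = eqToHom (Function.update_of_ne h X b) ≫ g j := by
  simp [updL, dif_neg h]

def updR {b c : ∀ j, C j} (g : ∀ j, b j ⟶ c j) (i : I) {Y : C i} (f : b i ⟶ Y) :
    ∀ j, b j ⟶ Function.update c i Y j := fun j =>
  dite (j = i)
    (fun h => by subst h; exact f ≫ eqToHom (Function.update_self j Y c).symm)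
    (fun h => g j ≫ eqToHom (Function.update_of_ne h Y c).symm)

@[simp] lemma updR_same {b c : ∀ j, C j} (g : ∀ j, b j ⟶ c j) (i : I) {Y : C i} (f : b i ⟶ Y) :
    updR g i f i = f ≫ eqToHom (Function.update_self i Y c).symm := by
  simp [updR]

@[simp] lemma updR_noteq {b c : ∀ j, C j} (g : ∀ j, b j ⟶ c j) (i : I) {Y : C i} (f : b i ⟶ Y)
    {j : I} (h : j ≠ i) :
    updR g i f j = g j ≫ eqToHom (Function.update_of_ne h Y c).symm := by
  simp [updR, dif_neg h]

def upd₂ {b c : ∀ j, C j} (g : ∀ j, b j ⟶ c j) (i : I) {X Y : C i} (f : X ⟶ Y) :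
    ∀ j, Function.update b i X j ⟶ Function.update c i Y j := fun j =>
  dite (j = i)
    (fun h => by
      subst h
      exact eqToHom (Function.update_self j X b) ≫ f ≫ eqToHom (Function.update_self j Y c).symm)
    (fun h => eqToHom (Function.update_of_ne h X b) ≫ g j ≫
        eqToHom (Function.update_of_ne h Y c).symm)

@[simp] lemma upd₂_same {b c : ∀ j, C j} (g : ∀ j, b j ⟶ c j) (i : I) {X Y : C i} (f : X ⟶ Y) :
    upd₂ g i f i =
      eqToHom (Function.update_self i X b) ≫ f ≫ eqToHom (Function.update_self i Y c).symm := by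
  simp [upd₂]

@[simp] lemma upd₂_noteq {b c : ∀ j, C j} (g : ∀ j, b j ⟶ c j) (i : I) {X Y : C i} (f : X ⟶ Y)
    {j : I} (h : j ≠ i) :
    upd₂ g i f j = eqToHom (Function.update_of_ne h X b) ≫ g j ≫
      eqToHom (Function.update_of_ne h Y c).symm := by
  simp [upd₂, dif_neg h]

lemma mem_update {S : ∀ j, Set (C j)} {b : ∀ j, C j} (hb : ∀ j, b j ∈ S j) (i : I)
    {X : C i} (hX : X ∈ S i) : ∀ j, Function.update b i X j ∈ S j := fun j => by
  by_cases h : j = i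
  · subst h; rw [Function.update_self]; exact hX
  · rw [Function.update_of_ne h]; exact hb j

end Helpers

/-- for a non-empty family of non-empty categories `ℂᵢ` with full replete
(and non-empty) subcategories `𝒯ᵢ`, `ℱᵢ`, the pair `(∏ᵢ𝒯ᵢ, ∏ᵢℱᵢ)` is a pretorsion theory
in the product category `∏ᵢℂᵢ` iff each `(𝒯ᵢ, ℱᵢ)` is a pretorsion theory in `ℂᵢ`. -/


theorem stmt7 {I : Type w} [Nonempty I] {C : I → Type u} [∀ i, Category.{v} (C i)]
    [∀ i, Nonempty (C i)]
    (T F : ∀ i, Set (C i))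
    (hTne : ∀ i, (T i).Nonempty) (hFne : ∀ i, (F i).Nonempty)
    (hTrep : ∀ i ⦃X Y : C i⦄, (X ≅ Y) → X ∈ T i → Y ∈ T i)
    (hFrep : ∀ i ⦃X Y : C i⦄, (X ≅ Y) → X ∈ F i → Y ∈ F i) :
    IsPretorsionTheory
      {X : ∀ i, C i | ∀ i, X i ∈ T i}
      {X : ∀ i, C i | ∀ i, X i ∈ F i} ↔
    ∀ i, IsPretorsionTheory (T i) (F i) := by
  classical
  constructor
  · -- product pretorsion theory implies componentwise
    intro H i
    obtain ⟨A₀, B₀, hA₀, hB₀, m₀, e₀, hse₀⟩ := H.2 (fun j => Classical.arbitrary (C j))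
    constructor
    · -- (T1)
      intro A B hA hB f
      obtain ⟨W, hW, g, h, hgh⟩ :=
        H.1 (mem_update hA₀ i hA) (mem_update hB₀ i hB)
          (upd₂ (fun j => m₀ j ≫ e₀ j) i f)
      refine ⟨W i, ⟨hW.1 i, hW.2 i⟩,
        eqToHom (Function.update_self i A A₀).symm ≫ g i,
        h i ≫ eqToHom (Function.update_self i B B₀), ?_⟩
      have key : g i ≫ h i = eqToHom (Function.update_self i A A₀) ≫ f ≫
          eqToHom (Function.update_self i B B₀).symm := by
        have := congrFun hgh i
        simpa using this
      rw [Category.assoc, ← Category.assoc (g i), key]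
      simp
    · -- (T2)
      intro X
      set X' : ∀ j, C j := Function.update (fun j => Classical.arbitrary (C j)) i X with hX'
      have hXi : X' i = X := Function.update_self i X _
      obtain ⟨A, B, hA, hB, m, e, hker, hcoker⟩ := H.2 X'
      obtain ⟨W₀, hW₀, g₀, h₀, hgh₀⟩ := hker.1
      refine ⟨A i, B i, hA i, hB i, m i ≫ eqToHom hXi, eqToHom hXi.symm ≫ e i,
        ⟨⟨⟨W₀ i, ⟨hW₀.1 i, hW₀.2 i⟩, g₀ i, h₀ i, ?_⟩, ?_⟩,
         ⟨⟨W₀ i, ⟨hW₀.1 i, hW₀.2 i⟩, g₀ i, h₀ i, ?_⟩, ?_⟩⟩⟩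
      · have := congrFun hgh₀ i
        simpa using this
      · -- kernel universal property
        intro U u hu
        obtain ⟨W, hW, g, h, hgh⟩ := hu
        -- extend u to the product
        have hnull : IsNull ({X : ∀ i, C i | ∀ i, X i ∈ T i} ∩ {X : ∀ i, C i | ∀ i, X i ∈ F i})
            ((updL m i (u ≫ eqToHom hXi.symm) : Function.update A i U ⟶ X') ≫ e) := by
          refine ⟨Function.update W₀ i W,
            ⟨mem_update hW₀.1 i hW.1, mem_update hW₀.2 i hW.2⟩,
            upd₂ g₀ i g, updL h₀ i h, ?_⟩
          funext j
          by_cases hj : j = i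
          · subst hj
            have : g ≫ h = u ≫ eqToHom hXi.symm ≫ e j := by
              simpa using hgh
            simp [this]
          · have : g₀ j ≫ h₀ j = m j ≫ e j := congrFun hgh₀ j
            simp [hj, this, reassoc_of% this]
        obtain ⟨w, hw, hwu⟩ := hker.2 (updL m i (u ≫ eqToHom hXi.symm)) hnull
        refine ⟨eqToHom (Function.update_self i U A).symm ≫ w i, ?_, ?_⟩
        · have := congrFun hw i
          simp at this
          show (eqToHom (Function.update_self i U A).symm ≫ w i) ≫ m i ≫ eqToHom hXi = u
          simp [reassoc_of% this]
        · intro y hy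
          have huniq : updL (fun j => 𝟙 (A j)) i y = w := by
            apply hwu
            funext j
            by_cases hj : j = i
            · subst hj
              have : y ≫ m j = u ≫ eqToHom hXi.symm := by
                rw [← hy]; simp
              simp [this]
            · simp [hj]
          have := congrFun huniq i
          simp at this
          rw [← this]
          simp
      · have := congrFun hgh₀ i
        simpa using this
      · -- cokernel universal property
        intro V v hv
        obtain ⟨W, hW, g, h, hgh⟩ := hv
        have hnull : IsNull ({X : ∀ i, C i | ∀ i, X i ∈ T i} ∩ {X : ∀ i, C i | ∀ i, X i ∈ F i})
            (m ≫ (updR e i (eqToHom hXi ≫ v) : X' ⟶ Function.update B i V)) := by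
          refine ⟨Function.update W₀ i W,
            ⟨mem_update hW₀.1 i hW.1, mem_update hW₀.2 i hW.2⟩,
            updR g₀ i g, upd₂ h₀ i h, ?_⟩
          funext j
          by_cases hj : j = i
          · subst hj
            have : g ≫ h = m j ≫ eqToHom hXi ≫ v := by
              simpa using hgh
            simp [reassoc_of% this]
          · have : g₀ j ≫ h₀ j = m j ≫ e j := congrFun hgh₀ j
            simp [hj, this, reassoc_of% this]
        obtain ⟨w, hw, hwu⟩ := hcoker.2 (updR e i (eqToHom hXi ≫ v)) hnull
        refine ⟨w i ≫ eqToHom (Function.update_self i V B), ?_, ?_⟩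
        · have := congrFun hw i
          simp at this
          show (eqToHom hXi.symm ≫ e i) ≫ w i ≫ eqToHom (Function.update_self i V B) = v
          simp [reassoc_of% this]
        · intro y hy
          have huniq : updR (fun j => 𝟙 (B j)) i y = w := by
            apply hwu
            funext j
            by_cases hj : j = i
            · subst hj
              have : e j ≫ y = eqToHom hXi ≫ v := by
                rw [← hy]; simp
              simp [reassoc_of% this]
            · simp [hj]
          have := congrFun huniq i
          simp at this
          rw [← this]
          simp
  · -- componentwise pretorsion theories imply product
    intro H
    constructor
    · intro A B hA hB f
      choose W hW g h hgh using fun i => (H i).1 (hA i) (hB i) (f i)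
      exact ⟨W, ⟨fun i => (hW i).1, fun i => (hW i).2⟩, g, h, funext hgh⟩
    · intro X
      choose A B hA hB m e hse using fun i => (H i).2 (X i)
      refine ⟨A, B, hA, hB, m, e, ⟨⟨?_, ?_⟩, ⟨?_, ?_⟩⟩⟩
      · choose W hW g h hgh using fun i => (hse i).1.1
        exact ⟨W, ⟨fun i => (hW i).1, fun i => (hW i).2⟩, g, h, funext hgh⟩
      · intro U u hu
        obtain ⟨W, hW, g, h, hgh⟩ := hu
        choose w hw hwu using fun i =>
          (hse i).1.2 (u i) ⟨W i, ⟨hW.1 i, hW.2 i⟩, g i, h i, congrFun hgh i⟩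
        exact ⟨w, funext hw, fun y hy => funext fun i => hwu i (y i) (congrFun hy i)⟩
      · choose W hW g h hgh using fun i => (hse i).2.1
        exact ⟨W, ⟨fun i => (hW i).1, fun i => (hW i).2⟩, g, h, funext hgh⟩
      · intro V v hv
        obtain ⟨W, hW, g, h, hgh⟩ := hv
        choose w hw hwu using fun i =>
          (hse i).2.2 (v i) ⟨W i, ⟨hW.1 i, hW.2 i⟩, g i, h i, congrFun hgh i⟩
        exact ⟨w, funext hw, fun y hy => funext fun i => hwu i (y i) (congrFun hy i)⟩
end

section
/- For any category ℂ and any full replete subcategory 𝟏 of ℂ, the pair (ℂ, 𝟏) is a pretorsion theory in ℂ if and only if 𝟏 is an epireflective subcategory of ℂ (i.e., the inclusion 𝟏 ↪ ℂ has a left adjoint whose unit components are epimorphisms). -/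
open CategoryTheory CategoryTheory.Limits

universe w v v₁ v₂ u u₁ u₂

/-- A full replete subcategory (given by its class of objects `A`) is *epireflective* if
every object admits a reflection into `A` whose unit component is an epimorphism. -/
def IsEpireflective {C : Type u} [Category.{v} C] (A : Set C) : Prop :=
  ∀ X : C, ∃ (R : C) (_ : R ∈ A) (η : X ⟶ R), Epi η ∧
    ∀ ⦃Y : C⦄, Y ∈ A → ∀ f : X ⟶ Y, ∃! g : R ⟶ Y, η ≫ g = f

/-- A full replete subcategory (given by its class of objects `A`) is *monocoreflective*
if every object admits a coreflection from `A` whose counit component is a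
monomorphism. -/
def IsMonocoreflective {C : Type u} [Category.{v} C] (A : Set C) : Prop :=
  ∀ X : C, ∃ (R : C) (_ : R ∈ A) (ε : R ⟶ X), Mono ε ∧
    ∀ ⦃Y : C⦄, Y ∈ A → ∀ f : Y ⟶ X, ∃! g : Y ⟶ R, g ≫ ε = f

/-- for any category `ℂ` and full replete subcategory `𝟏`, the pair `(ℂ, 𝟏)`
is a pretorsion theory in `ℂ` iff `𝟏` is an epireflective subcategory of `ℂ`. -/
theorem stmt11 {C : Type u₁} [Category.{v₁} C] (One : Set C)
    (hrep : ∀ ⦃X Y : C⦄, (X ≅ Y) → X ∈ One → Y ∈ One) :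
    IsPretorsionTheory (Set.univ : Set C) One ↔ IsEpireflective One := by
  constructor
  · rintro ⟨_, h2⟩ X
    obtain ⟨A, B, -, hB, m, e, ⟨-, hcok⟩⟩ := h2 X
    obtain ⟨hnull, huniv⟩ := hcok
    refine ⟨B, hB, e, ?_, ?_⟩
    · constructor
      intro V a b hab
      have hna : IsNull (Set.univ ∩ One) (m ≫ e ≫ a) := by
        obtain ⟨W, hW, g, h, hgh⟩ := hnull
        exact ⟨W, hW, g, h ≫ a, by rw [← Category.assoc, hgh, Category.assoc]⟩
      obtain ⟨v', -, huniq⟩ := huniv (e ≫ a) hna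
      have h1 := huniq a rfl
      have h2 := huniq b hab.symm
      rw [h1, h2]
    · intro Y hY f
      exact huniv f ⟨Y, ⟨trivial, hY⟩, m ≫ f, 𝟙 Y, by simp⟩
  · intro hEp
    constructor
    · intro A B _ hB f
      exact ⟨B, ⟨trivial, hB⟩, f, 𝟙 B, by simp⟩
    · intro X
      obtain ⟨R, hR, η, hepi, huniv⟩ := hEp X
      refine ⟨X, R, trivial, hR, 𝟙 X, η, ⟨?_, ?_⟩⟩
      · refine ⟨⟨R, ⟨trivial, hR⟩, η, 𝟙 R, by simp⟩, ?_⟩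
        intro U u _
        exact ⟨u, by simp, fun y hy => by simpa using hy⟩
      · refine ⟨⟨R, ⟨trivial, hR⟩, η, 𝟙 R, by simp⟩, ?_⟩
        intro V v hv
        obtain ⟨W, ⟨-, hW⟩, g, h, hgh⟩ := hv
        obtain ⟨g', hg', -⟩ := huniv hW g
        refine ⟨g' ≫ h, by show η ≫ g' ≫ h = v; rw [← Category.assoc, hg']; simpa using hgh, ?_⟩
        intro y hy
        have : η ≫ y = η ≫ g' ≫ h := by
          rw [hy, ← Category.assoc, hg']; simpa using hgh.symm
        exact hepi.left_cancellation _ _ this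
end

section
/- Let ℂ be a category with a terminal object T and 𝔻 a category with an initial object I. If (X, I) →^{(m₁, m₂)} (C, D) →^{(e₁, e₂)} (T, Y) is a short exact sequence in ℂ×𝔻 relative to the ideal of morphisms factoring through objects whose first component is terminal in ℂ and whose second component is initial in 𝔻, then m₁ is a split epimorphism (hence, being also a monomorphism, an isomorphism) and e₂ is a split monomorphism (hence, being also an epimorphism, an isomorphism). -/
open CategoryTheory CategoryTheory.Limits

universe w v v₁ v₂ u u₁ u₂

/-!
Every morphism `P ⟶ Q` of `ℂ × 𝔻` factors through `(Q.1, P.2)`, so any morphism out of an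
object with initial second component into one with terminal first component is null. Hence
`(𝟙 C, I ⟶ D) : (C, I) ⟶ (C, D)` lifts through the relative kernel `(m₁, m₂)`, giving a section
of `m₁`, and dually `(C ⟶ T, 𝟙 D) : (C, D) ⟶ (T, D)` extends along the relative cokernel
`(e₁, e₂)`, giving a retraction of `e₂`. Relative kernels are monomorphisms and relative
cokernels are epimorphisms, and these properties pass to the components.
-/

section RelativeKernels

variable {C : Type u} [Category.{v} C] {Z : Set C}

lemma IsNull.comp_left {A X Y : C} (w : A ⟶ X) {f : X ⟶ Y} (hf : IsNull Z f) :
    IsNull Z (w ≫ f) := by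
  obtain ⟨W, hW, g, h, rfl⟩ := hf
  exact ⟨W, hW, w ≫ g, h, by simp⟩

lemma IsNull.comp_right {X Y B : C} {f : X ⟶ Y} (hf : IsNull Z f) (w : Y ⟶ B) :
    IsNull Z (f ≫ w) := by
  obtain ⟨W, hW, g, h, rfl⟩ := hf
  exact ⟨W, hW, g, h ≫ w, by simp⟩

lemma IsRelKernel.mono {T X F : C} {m : T ⟶ X} {e : X ⟶ F} (h : IsRelKernel Z m e) :
    Mono m where
  right_cancellation g g' hg := by
    have hnull : IsNull Z ((g ≫ m) ≫ e) := by
      simpa only [Category.assoc] using h.1.comp_left g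
    exact (h.2 _ hnull).unique rfl hg.symm

lemma IsRelCokernel.epi {T X F : C} {m : T ⟶ X} {e : X ⟶ F} (h : IsRelCokernel Z m e) :
    Epi e where
  left_cancellation g g' hg := by
    have hnull : IsNull Z (m ≫ e ≫ g) := by
      simpa only [Category.assoc] using h.1.comp_right g
    exact (h.2 _ hnull).unique rfl hg.symm

end RelativeKernels

section Product

variable {𝕮 : Type u₁} {𝕯 : Type u₂} [Category.{v₁} 𝕮] [Category.{v₂} 𝕯]

lemma isNull_prod_of_mem {Z : Set (𝕮 × 𝕯)} {P Q : 𝕮 × 𝕯} (f : P ⟶ Q) (h : (Q.1, P.2) ∈ Z) :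
    IsNull Z f :=
  ⟨(Q.1, P.2), h, (f.1, 𝟙 P.2), (𝟙 Q.1, f.2), by ext <;> simp⟩

lemma mono_fst_of_mono {P Q : 𝕮 × 𝕯} (f : P ⟶ Q) [Mono f] : Mono f.1 where
  right_cancellation {W} g g' hg := by
    have : ((g, 𝟙 P.2) : ((W, P.2) : 𝕮 × 𝕯) ⟶ P) = (g', 𝟙 P.2) :=
      (cancel_mono f).1 (Prod.ext hg rfl)
    exact congrArg Prod.fst this

lemma epi_snd_of_epi {P Q : 𝕮 × 𝕯} (f : P ⟶ Q) [Epi f] : Epi f.2 where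
  left_cancellation {W} g g' hg := by
    have : ((𝟙 Q.1, g) : Q ⟶ ((Q.1, W) : 𝕮 × 𝕯)) = (𝟙 Q.1, g') :=
      (cancel_epi f).1 (Prod.ext rfl hg)
    exact congrArg Prod.snd this

end Product

/-- in a short exact sequence `(X,I) ⟶ (C,D) ⟶ (T,Y)` in `ℂ × 𝔻`, with `I`
initial and `T` terminal, relative to the ideal of morphisms factoring through objects of
`𝟏 × 𝟎`, the morphism `m₁` is a split epimorphism (hence an isomorphism) and `e₂` is a
split monomorphism (hence an isomorphism). -/
theorem stmt14 {𝕮 : Type u₁} {𝕯 : Type u₂} [Category.{v₁} 𝕮] [Category.{v₂} 𝕯]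
    {I : 𝕯} (hI : IsInitial I) {T : 𝕮} (hT : IsTerminal T)
    {X C : 𝕮} {D Y : 𝕯}
    (m₁ : X ⟶ C) (m₂ : I ⟶ D) (e₁ : C ⟶ T) (e₂ : D ⟶ Y)
    (hse : IsShortExact {P : 𝕮 × 𝕯 | Nonempty (IsTerminal P.1) ∧ Nonempty (IsInitial P.2)}
      ((m₁, m₂) : ((X, I) : 𝕮 × 𝕯) ⟶ (C, D))
      ((e₁, e₂) : ((C, D) : 𝕮 × 𝕯) ⟶ (T, Y))) :
    IsSplitEpi m₁ ∧ IsIso m₁ ∧ IsSplitMono e₂ ∧ IsIso e₂ := by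
  obtain ⟨hker, hcoker⟩ := hse
  have hTI : Nonempty (IsTerminal T) ∧ Nonempty (IsInitial I) := ⟨⟨hT⟩, ⟨hI⟩⟩
  obtain ⟨s, hs, -⟩ := hker.2 ((𝟙 C, hI.to D) : ((C, I) : 𝕮 × 𝕯) ⟶ (C, D))
    (isNull_prod_of_mem _ hTI)
  obtain ⟨r, hr, -⟩ := hcoker.2 ((hT.from C, 𝟙 D) : ((C, D) : 𝕮 × 𝕯) ⟶ (T, D))
    (isNull_prod_of_mem _ hTI)
  have : IsSplitEpi m₁ := ⟨⟨s.1, congrArg Prod.fst hs⟩⟩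
  have : IsSplitMono e₂ := ⟨⟨r.2, congrArg Prod.snd hr⟩⟩
  have := hker.mono
  have := hcoker.epi
  have : Mono m₁ := mono_fst_of_mono ((m₁, m₂) : ((X, I) : 𝕮 × 𝕯) ⟶ (C, D))
  have : Epi e₂ := epi_snd_of_epi ((e₁, e₂) : ((C, D) : 𝕮 × 𝕯) ⟶ (T, Y))
  exact ⟨inferInstance, isIso_of_mono_of_isSplitEpi m₁, inferInstance,
    isIso_of_epi_of_isSplitMono e₂⟩
end

section
/- In the product category Setᵒᵖ × Set, the pair (Setᵒᵖ×𝟎, 𝟏×Set), where Setᵒᵖ×𝟎 is the full subcategory of objects (X, Y) with Y an initial object of Set (i.e., Y empty) and 𝟏×Set is the full subcategory of objects (X, Y) with X a terminal object of Setᵒᵖ (i.e., X empty), is a pretorsion theory. -/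
open CategoryTheory CategoryTheory.Limits

universe w v v₁ v₂ u u₁ u₂

/-!
The argument works in any product `C × D` where `C` has a strict terminal object and `D` a strict
initial object; in `Setᵒᵖ × Set` both are the empty set. By strictness, a morphism `P ⟶ Q` factors
through an object of `𝒵` exactly when `P.2` is initial and `Q.1` is terminal. Hence
`(X, ⊥) ⟶ (X, Y) ⟶ (⊤, Y)` is short exact: a morphism `U ⟶ (X, Y)` killed by the second map
has `U.2` initial, so it lifts uniquely along `(𝟙, ⊥ ⟶ Y)`, and dually for the cokernel.
-/

instance hasStrictTerminalObjects_op {C : Type u₁} [Category.{v₁} C]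
    [HasStrictInitialObjects C] : HasStrictTerminalObjects Cᵒᵖ where
  out f hI := (isIso_unop_iff f).mp (hI.unop.isIso_to f.unop)

namespace PretorsionProd

open scoped Prod

variable {C : Type u₁} [Category.{v₁} C] {D : Type u₂} [Category.{v₂} D]

abbrev torsion : Set (C × D) := {P | Nonempty (IsInitial P.2)}

abbrev torsionFree : Set (C × D) := {P | Nonempty (IsTerminal P.1)}

lemma isNull_of_isInitial_of_isTerminal [HasTerminal C] [HasInitial D] {P Q : C × D}
    (hP : IsInitial P.2) (hQ : IsTerminal Q.1) (f : P ⟶ Q) :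
    IsNull (torsion ∩ torsionFree) f :=
  ⟨(⊤_ C, ⊥_ D), ⟨⟨initialIsInitial⟩, ⟨terminalIsTerminal⟩⟩,
    (terminal.from P.1, hP.to _), (hQ.from _, initial.to Q.2),
    Prod.hom_ext (hQ.hom_ext _ _) (hP.hom_ext _ _)⟩

lemma isInitial_snd_and_isTerminal_fst_of_isNull
    [HasStrictTerminalObjects C] [HasStrictInitialObjects D]
    {P Q : C × D} {f : P ⟶ Q} (hf : IsNull (torsion ∩ torsionFree) f) :
    Nonempty (IsInitial P.2) ∧ Nonempty (IsTerminal Q.1) := by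
  obtain ⟨W, ⟨⟨hW₂⟩, ⟨hW₁⟩⟩, g, h, -⟩ := hf
  exact ⟨⟨IsInitial.ofStrict g.2 hW₂⟩, ⟨IsTerminal.ofStrict h.1 hW₁⟩⟩

variable [HasTerminal C] [HasStrictTerminalObjects C] [HasInitial D] [HasStrictInitialObjects D]

lemma isShortExact_initial_terminal (X : C) (Y : D) :
    IsShortExact (torsion ∩ torsionFree) (𝟙 X ×ₘ initial.to Y) (terminal.from X ×ₘ 𝟙 Y) := by
  have hnull := isNull_of_isInitial_of_isTerminal (P := (X, ⊥_ D)) (Q := (⊤_ C, Y))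
    initialIsInitial terminalIsTerminal
  refine ⟨⟨hnull _, fun U u hu => ?_⟩, ⟨hnull _, fun V v hv => ?_⟩⟩
  · obtain ⟨⟨hU⟩, -⟩ := isInitial_snd_and_isTerminal_fst_of_isNull hu
    refine ⟨(u.1, hU.to _), Prod.hom_ext (Category.comp_id _) (hU.hom_ext _ _), fun w hw => ?_⟩
    refine Prod.hom_ext ?_ (hU.hom_ext _ _)
    exact (Category.comp_id _).symm.trans (congrArg Prod.fst hw)
  · obtain ⟨-, ⟨hV⟩⟩ := isInitial_snd_and_isTerminal_fst_of_isNull hv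
    refine ⟨(hV.from _, v.2), Prod.hom_ext (hV.hom_ext _ _) (Category.id_comp _), fun w hw => ?_⟩
    refine Prod.hom_ext (hV.hom_ext _ _) ?_
    exact (Category.id_comp _).symm.trans (congrArg Prod.snd hw)

theorem isPretorsionTheory : IsPretorsionTheory (torsion (C := C) (D := D)) torsionFree :=
  ⟨fun _ _ ⟨hA⟩ ⟨hB⟩ f => isNull_of_isInitial_of_isTerminal hA hB f,
    fun X => ⟨_, _, ⟨initialIsInitial⟩, ⟨terminalIsTerminal⟩, _, _,
      isShortExact_initial_terminal X.1 X.2⟩⟩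

end PretorsionProd

/-- in the product category `Setᵒᵖ × Set`, the pair consisting of the full
subcategory of objects `(X, Y)` with `Y` an initial object of `Set` and the full
subcategory of objects `(X, Y)` with `X` a terminal object of `Setᵒᵖ` is a pretorsion
theory. -/
theorem stmt15 :
    IsPretorsionTheory
      {P : (Type u)ᵒᵖ × Type u | Nonempty (IsInitial P.2)}
      {P : (Type u)ᵒᵖ × Type u | Nonempty (IsTerminal P.1)} :=
  PretorsionProd.isPretorsionTheory
end
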